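/- arXiv:2406.07468 — 2 statements merged into one kernel-verified Lean document; each statement's English description precedes it below -/
import Mathlib

section
/- Let n ≥ 3 be odd, q = 2^n, and α ∈ 𝔽_q^*. For a ∈ 𝔽_q^* with a ≠ α and x ∈ 𝔽_q, one has ∇_{F_{0,α}}(a,x) = 4 if and only if either (i) Tr(α/(a+α)) = 0 and x ∈ {0, a, aρ, aρ + a}, where ρ ∈ 𝔽_q satisfies ρ² + ρ = α/(a+α), or (ii) Tr(α/a) = 1 and x ∈ {α, α + a, aμ, aμ + a}, where μ ∈ 𝔽_q satisfies μ² + μ = (a+α)/a; for all other x one has ∇_{F_{0,α}}(a,x) = 2. Moreover ∇_{F_{0,α}}(α,x) = 2 for all x ∈ 𝔽_q. -/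
namespace APNPaper

open Finset

variable {F : Type*} [Field F] [Fintype F] [DecidableEq F]

/-- `δ_G(a,b)`: the number of `x` with `D_aG(x) = G(x) + G(x+a) = b`. -/
def delta (G : F → F) (a b : F) : ℕ :=
  (Finset.univ.filter fun x : F => G x + G (x + a) = b).card

/-- `∇_G(a,x) = δ_G(a, D_aG(x))`. -/
def nabla (G : F → F) (a x : F) : ℕ := delta G a (G x + G (x + a))

/-- `G` is almost perfect nonlinear. -/
def IsAPN (G : F → F) : Prop := ∀ a : F, a ≠ 0 → ∀ b : F, delta G a b ≤ 2

/-- The derivative `D_aG` is 2-to-1, i.e. `G` satisfies property `(p_a)`. -/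
def TwoToOne (G : F → F) (a : F) : Prop :=
  ∀ b : F, delta G a b = 0 ∨ delta G a b = 2

instance instDecTwoToOne (G : F → F) (a : F) : Decidable (TwoToOne G a) := by
  unfold TwoToOne; infer_instance

/-- The row spectrum `R-Spec_q(G)`. -/
def RSpec (G : F → F) : Finset F :=
  (Finset.univ.erase (0 : F)).filter fun a => TwoToOne G a

/-- `S_a = {x : ∇_G(a,x) = 2}`. -/
def Sset (G : F → F) (a : F) : Finset F :=
  Finset.univ.filter fun x : F => nabla G a x = 2

/-- `w_{S_a^c} = Σ_{b : δ_G(a,b) > 2} (δ_G(a,b)/2)²`. -/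
def wS (G : F → F) (a : F) : ℤ :=
  ∑ b : F, if 2 < delta G a b then ((delta G a b / 2 : ℕ) : ℤ) ^ 2 else 0

/-- `χ_a = 1` if `S_a = 𝔽_q`, and `0` otherwise. -/
def chi (G : F → F) (a : F) : ℤ :=
  if Sset G a = Finset.univ then 1 else 0

/-- `𝒟(G) = Σ_{a ≠ 0} (|S_a| − w_{S_a^c} + χ_a)`. -/
def Dscr (G : F → F) : ℤ :=
  ∑ a ∈ Finset.univ.erase (0 : F), (((Sset G a).card : ℤ) - wS G a + chi G a)

/-- The APN-defect `APN-def(G) = q² − 1 − 𝒟(G)`. -/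
def APNdef (G : F → F) : ℤ := (Fintype.card F : ℤ) ^ 2 - 1 - Dscr G

/-- The differential uniformity `δ_G`. -/
def diffUnif (G : F → F) : ℕ :=
  ((Finset.univ.erase (0 : F)) ×ˢ Finset.univ).sup fun p => delta G p.1 p.2

/-- The set of vanishing flats of `G`. -/
def VF (G : F → F) : Set (Finset F) :=
  {S | ∃ x y z : F, x ≠ y ∧ x ≠ z ∧ y ≠ z ∧
    G x + G y + G z + G (x + y + z) = 0 ∧ S = ({x, y, z, x + y + z} : Finset F)}

/-- The absolute trace `Tr(z) = z + z² + ⋯ + z^{2^{n-1}}` (with values in `{0,1} ⊆ F`). -/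
def Tr (n : ℕ) (z : F) : F := ∑ i ∈ Finset.range n, z ^ (2 ^ i)

/-- The modification `F_{0,α}` of the inverse function: the values of the inverse
function at `0` and `α` are swapped. -/
def Fmod (α : F) : F → F :=
  fun x => if x = 0 then α⁻¹ else if x = α then 0 else x⁻¹

/-!
For `a ≠ α` the derivative `D(y) = F_{0,α}(y) + F_{0,α}(y + a)` is constant on the pairs
`{y, y + a}`: it equals `α⁻¹ + a⁻¹` on `{0, a}`, `(a + α)⁻¹` on `{α, α + a}`, and `a / (y² + a y)`
on every other pair. Since `y ↦ y² + a y` is 2-to-1 with exactly these pairs as fibres, two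
distinct generic pairs never share a value, and the two special values differ because
`ω² + ω = 1` has no solution when `n` is odd (`Tr 1 = 1`). So a fibre of `D` has four elements
exactly when a special pair shares its value with a generic one, i.e. when
`y² + a y = a² α / (a + α)` or `y² + a y = a (a + α)` is solvable; `ρ` resp. `μ` is `y / a`.
For `a = α` the derivative coincides with that of the inverse function `y ↦ y⁻¹`
(Lean's `0⁻¹ = 0` makes this exactly `x ↦ x^(q-2)`), which is APN for odd `n`.
-/

section Fiber

variable {K : Type*} [Field K] [Fintype K] [DecidableEq K]

def fiber (G : K → K) (a b : K) : Finset K := univ.filter fun y => G y + G (y + a) = b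

theorem mem_fiber {G : K → K} {a b y : K} : y ∈ fiber G a b ↔ G y + G (y + a) = b := by
  simp [fiber]

theorem nabla_eq_card_fiber (G : K → K) (a x : K) :
    nabla G a x = (fiber G a (G x + G (x + a))).card :=
  rfl

end Fiber

section CharTwo

variable {K : Type*} [Field K] [CharP K 2]

theorem sq_add_mul_eq_sq_add_mul_iff {a x y : K} :
    y ^ 2 + a * y = x ^ 2 + a * x ↔ y = x ∨ y = x + a := by
  grind

theorem inv_add_inv_add_eq_div {a y : K} (hy : y ≠ 0) (hya : y + a ≠ 0) :
    y⁻¹ + (y + a)⁻¹ = a / (y ^ 2 + a * y) := by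
  grind

theorem card_pair_add [DecidableEq K] {a : K} (ha : a ≠ 0) (x : K) :
    ({x, x + a} : Finset K).card = 2 :=
  card_pair fun h => ha (by grind)

theorem exists_sq_add_self_and_eq_iff {a : K} (ha : a ≠ 0) (c u x : K) :
    (∃ ρ : K, ρ ^ 2 + ρ = c ∧ (x = u ∨ x = u + a ∨ x = a * ρ ∨ x = a * ρ + a)) ↔
      (x = u ∨ x = u + a ∨ x ^ 2 + a * x = a ^ 2 * c) ∧ ∃ ρ : K, ρ ^ 2 + ρ = c := by
  constructor
  · rintro ⟨ρ, hρ, hx⟩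
    refine ⟨?_, ρ, hρ⟩
    rcases hx with hx | hx | rfl | rfl <;> grind
  · rintro ⟨hx | hx | hx, ρ, hρ⟩
    · exact ⟨ρ, hρ, Or.inl hx⟩
    · exact ⟨ρ, hρ, Or.inr (Or.inl hx)⟩
    · refine ⟨x / a, ?_, Or.inr (Or.inr (Or.inl (mul_div_cancel₀ x ha).symm))⟩
      field_simp
      grind

theorem Tr_add {n : ℕ} (z w : K) : Tr n (z + w) = Tr n z + Tr n w := by
  simp only [Tr, ← sum_add_distrib, add_pow_char_pow]

theorem Tr_one {n : ℕ} (hodd : Odd n) : Tr n (1 : K) = 1 := by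
  obtain ⟨k, rfl⟩ := hodd
  simp [Tr, CharTwo.two_eq_zero]

section Finite

variable [Fintype K] {n : ℕ}

theorem Tr_sq_add_self (hcard : Fintype.card K = 2 ^ n) (z : K) : Tr n (z ^ 2 + z) = 0 := by
  have hfrob : z ^ 2 ^ n = z := by rw [← hcard, FiniteField.pow_card]
  have hshift : ∑ i ∈ range n, z ^ 2 ^ (i + 1) = Tr n z := by
    have h := (sum_range_succ' (fun i => z ^ 2 ^ i) n).symm.trans
      (sum_range_succ (fun i => z ^ 2 ^ i) n)
    rwa [pow_zero, pow_one, hfrob, add_left_inj] at h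
  have hsq : Tr n (z ^ 2) = Tr n z := by
    rw [← hshift]
    exact sum_congr rfl fun i _ => by rw [← pow_mul, pow_succ']
  rw [Tr_add, hsq, CharTwo.add_self_eq_zero]

theorem sq_add_self_ne_one (hcard : Fintype.card K = 2 ^ n) (hodd : Odd n) (ω : K) :
    ω ^ 2 + ω ≠ 1 := fun h => by
  simpa [Tr_one hodd, h] using Tr_sq_add_self hcard ω

theorem Tr_eq_one_of_sq_add_self_eq (hcard : Fintype.card K = 2 ^ n) (hodd : Odd n)
    {z μ : K} (hμ : μ ^ 2 + μ = 1 + z) : Tr n z = 1 := by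
  have h := Tr_sq_add_self hcard μ
  rw [hμ, Tr_add, Tr_one hodd] at h
  grind

theorem inv_add_inv_add_eq_inv_iff (hcard : Fintype.card K = 2 ^ n) (hodd : Odd n) {a : K}
    (ha : a ≠ 0) (y : K) : y⁻¹ + (y + a)⁻¹ = a⁻¹ ↔ y = 0 ∨ y = a := by
  have := sq_add_self_ne_one hcard hodd (y / a)
  by_cases hy : y = 0 ∨ y + a = 0
  · grind
  · rw [inv_add_inv_add_eq_div (by tauto) (by tauto)]
    field_simp
    grind

theorem inv_add_inv_add_eq_iff (hcard : Fintype.card K = 2 ^ n) (hodd : Odd n) {a : K}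
    (ha : a ≠ 0) {x y : K} : y⁻¹ + (y + a)⁻¹ = x⁻¹ + (x + a)⁻¹ ↔ y = x ∨ y = x + a := by
  have hspecial := inv_add_inv_add_eq_inv_iff hcard hodd ha
  by_cases hx : x = 0 ∨ x = a
  · rw [(hspecial x).2 hx, hspecial]
    grind
  by_cases hy : y = 0 ∨ y = a
  · rw [(hspecial y).2 hy, eq_comm, hspecial]
    grind
  rw [inv_add_inv_add_eq_div (by grind) (by grind), inv_add_inv_add_eq_div (by grind) (by grind),
    div_eq_mul_inv, div_eq_mul_inv, mul_right_inj' ha, inv_inj, sq_add_mul_eq_sq_add_mul_iff]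

theorem inv_add_inv_ne_inv_add (hcard : Fintype.card K = 2 ^ n) (hodd : Odd n) {α a : K}
    (hα : α ≠ 0) (ha : a ≠ 0) (haα : a ≠ α) : α⁻¹ + a⁻¹ ≠ (a + α)⁻¹ := by
  have := sq_add_self_ne_one hcard hodd (a / α)
  grind

variable [DecidableEq K]

theorem filter_sq_add_mul_eq_sq_add_mul (a x : K) :
    univ.filter (fun y => y ^ 2 + a * y = x ^ 2 + a * x) = {x, x + a} := by
  ext y
  simp [sq_add_mul_eq_sq_add_mul_iff]

theorem card_filter_sq_add_mul_eq_sq_mul {a : K} (ha : a ≠ 0) (c : K) :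
    (univ.filter fun y => y ^ 2 + a * y = a ^ 2 * c).card =
      if ∃ ρ : K, ρ ^ 2 + ρ = c then 2 else 0 := by
  split_ifs with h
  · obtain ⟨ρ, rfl⟩ := h
    rw [show a ^ 2 * (ρ ^ 2 + ρ) = (a * ρ) ^ 2 + a * (a * ρ) by ring,
      filter_sq_add_mul_eq_sq_add_mul, card_pair_add ha]
  · refine card_eq_zero.2 (filter_eq_empty_iff.2 fun y _ hy => h ⟨y / a, ?_⟩)
    field_simp
    grind

theorem card_pair_union_filter_sq_add_mul {a u v : K} (ha : a ≠ 0) (hu : u ^ 2 + a * u ≠ v) :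
    ({u, u + a} ∪ univ.filter fun y => y ^ 2 + a * y = v).card =
      2 + (univ.filter fun y => y ^ 2 + a * y = v).card := by
  rw [card_union_of_disjoint, card_pair_add ha]
  simp only [disjoint_left, mem_insert, mem_singleton, mem_filter, mem_univ, true_and]
  rintro y (rfl | rfl) <;> grind

theorem nabla_inv (hcard : Fintype.card K = 2 ^ n) (hodd : Odd n) {a : K} (ha : a ≠ 0) (x : K) :
    nabla (fun y => y⁻¹) a x = 2 := by
  have hfib : fiber (fun y => y⁻¹) a (x⁻¹ + (x + a)⁻¹) = {x, x + a} := by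
    ext y
    simp [mem_fiber, inv_add_inv_add_eq_iff hcard hodd ha]
  rw [nabla_eq_card_fiber, hfib, card_pair_add ha]

end Finite

section Fmod

variable [DecidableEq K] {α a : K}

theorem Fmod_add_Fmod_add_eq_iff (ha : a ≠ 0) (haα : a ≠ α) {y b : K} :
    Fmod α y + Fmod α (y + a) = b ↔
      ((y = 0 ∨ y = a) ∧ b = α⁻¹ + a⁻¹) ∨ ((y = α ∨ y = α + a) ∧ b = (a + α)⁻¹) ∨
      (y ≠ α ∧ y ≠ α + a ∧ b * (y ^ 2 + a * y) = a) := by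
  unfold Fmod
  split_ifs <;> grind

theorem Fmod_add_Fmod_add_self (y : K) : Fmod α y + Fmod α (y + α) = y⁻¹ + (y + α)⁻¹ := by
  unfold Fmod
  split_ifs <;> grind

theorem Fmod_add_Fmod_add_eq_iff_of_ne (ha : a ≠ 0) (haα : a ≠ α) {x y : K}
    (h₁ : Fmod α x + Fmod α (x + a) ≠ α⁻¹ + a⁻¹) (h₂ : Fmod α x + Fmod α (x + a) ≠ (a + α)⁻¹) :
    Fmod α y + Fmod α (y + a) = Fmod α x + Fmod α (x + a) ↔ y = x ∨ y = x + a := by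
  set b := Fmod α x + Fmod α (x + a)
  obtain ⟨hxα, hxαa, hbx⟩ : x ≠ α ∧ x ≠ α + a ∧ b * (x ^ 2 + a * x) = a := by
    simpa [h₁, h₂] using (Fmod_add_Fmod_add_eq_iff ha haα).1 (rfl : b = b)
  have hgeneric (y : K) : b * (y ^ 2 + a * y) = a ↔ y ^ 2 + a * y = x ^ 2 + a * x :=
    ⟨fun h => mul_left_cancel₀ (left_ne_zero_of_mul (hbx.trans_ne ha)) (h.trans hbx.symm),
      fun h => h ▸ hbx⟩
  rw [Fmod_add_Fmod_add_eq_iff ha haα, hgeneric, sq_add_mul_eq_sq_add_mul_iff]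
  grind

variable [Fintype K] {n : ℕ}

theorem nabla_Fmod_self (hcard : Fintype.card K = 2 ^ n) (hodd : Odd n) (hα : α ≠ 0) (x : K) :
    nabla (Fmod α) α x = 2 := by
  rw [← nabla_inv hcard hodd hα x]
  simp only [nabla, delta, Fmod_add_Fmod_add_self]

theorem Fmod_add_Fmod_add_eq_inv_add_inv_iff (hcard : Fintype.card K = 2 ^ n) (hodd : Odd n)
    (hα : α ≠ 0) (ha : a ≠ 0) (haα : a ≠ α) {y : K} :
    Fmod α y + Fmod α (y + a) = α⁻¹ + a⁻¹ ↔
      y = 0 ∨ y = a ∨ y ^ 2 + a * y = a ^ 2 * (α / (a + α)) := by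
  have haα' : a + α ≠ 0 := by grind
  have hgeneric : ∀ y : K, (α⁻¹ + a⁻¹) * (y ^ 2 + a * y) = a ↔
      y ^ 2 + a * y = a ^ 2 * (α / (a + α)) := fun y => by
    field_simp
  have hα' : α ^ 2 + a * α ≠ a ^ 2 * (α / (a + α)) := by
    field_simp
    grind
  have hαa : (α + a) ^ 2 + a * (α + a) = α ^ 2 + a * α :=
    sq_add_mul_eq_sq_add_mul_iff.2 (Or.inr rfl)
  have := inv_add_inv_ne_inv_add hcard hodd hα ha haα
  rw [Fmod_add_Fmod_add_eq_iff ha haα, hgeneric]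
  grind

theorem Fmod_add_Fmod_add_eq_inv_add_iff (hcard : Fintype.card K = 2 ^ n) (hodd : Odd n)
    (hα : α ≠ 0) (ha : a ≠ 0) (haα : a ≠ α) {y : K} :
    Fmod α y + Fmod α (y + a) = (a + α)⁻¹ ↔
      y = α ∨ y = α + a ∨ y ^ 2 + a * y = a ^ 2 * ((a + α) / a) := by
  have haα' : a + α ≠ 0 := by grind
  have hgeneric : ∀ y : K, (a + α)⁻¹ * (y ^ 2 + a * y) = a ↔
      y ^ 2 + a * y = a ^ 2 * ((a + α) / a) := fun y => by
    field_simp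
  have hαa : (α + a) ^ 2 + a * (α + a) = α ^ 2 + a * α :=
    sq_add_mul_eq_sq_add_mul_iff.2 (Or.inr rfl)
  have := inv_add_inv_ne_inv_add hcard hodd hα ha haα
  rw [Fmod_add_Fmod_add_eq_iff ha haα, hgeneric]
  grind

theorem card_fiber_Fmod_inv_add_inv (hcard : Fintype.card K = 2 ^ n) (hodd : Odd n)
    (hα : α ≠ 0) (ha : a ≠ 0) (haα : a ≠ α) :
    (fiber (Fmod α) a (α⁻¹ + a⁻¹)).card = if ∃ ρ : K, ρ ^ 2 + ρ = α / (a + α) then 4 else 2 := by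
  have hfib : fiber (Fmod α) a (α⁻¹ + a⁻¹) =
      {0, 0 + a} ∪ univ.filter fun y => y ^ 2 + a * y = a ^ 2 * (α / (a + α)) := by
    ext y
    simp [mem_fiber, Fmod_add_Fmod_add_eq_inv_add_inv_iff hcard hodd hα ha haα]
  have hc : (0 : K) ^ 2 + a * 0 ≠ a ^ 2 * (α / (a + α)) := by
    have : a + α ≠ 0 := by grind
    simp [ha, hα, this]
  rw [hfib, card_pair_union_filter_sq_add_mul ha hc, card_filter_sq_add_mul_eq_sq_mul ha]
  split_ifs <;> rfl

theorem card_fiber_Fmod_inv_add (hcard : Fintype.card K = 2 ^ n) (hodd : Odd n)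
    (hα : α ≠ 0) (ha : a ≠ 0) (haα : a ≠ α) :
    (fiber (Fmod α) a (a + α)⁻¹).card = if ∃ μ : K, μ ^ 2 + μ = (a + α) / a then 4 else 2 := by
  have hfib : fiber (Fmod α) a (a + α)⁻¹ =
      {α, α + a} ∪ univ.filter fun y => y ^ 2 + a * y = a ^ 2 * ((a + α) / a) := by
    ext y
    simp [mem_fiber, Fmod_add_Fmod_add_eq_inv_add_iff hcard hodd hα ha haα]
  have hc : α ^ 2 + a * α ≠ a ^ 2 * ((a + α) / a) := by
    field_simp
    grind
  rw [hfib, card_pair_union_filter_sq_add_mul ha hc, card_filter_sq_add_mul_eq_sq_mul ha]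
  split_ifs <;> rfl

theorem nabla_Fmod (hcard : Fintype.card K = 2 ^ n) (hodd : Odd n)
    (hα : α ≠ 0) (ha : a ≠ 0) (haα : a ≠ α) (x : K) :
    nabla (Fmod α) a x =
      if (Fmod α x + Fmod α (x + a) = α⁻¹ + a⁻¹ ∧ ∃ ρ : K, ρ ^ 2 + ρ = α / (a + α)) ∨
          (Fmod α x + Fmod α (x + a) = (a + α)⁻¹ ∧ ∃ μ : K, μ ^ 2 + μ = (a + α) / a)
        then 4 else 2 := by
  have hb := inv_add_inv_ne_inv_add hcard hodd hα ha haα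
  rw [nabla_eq_card_fiber]
  by_cases h₁ : Fmod α x + Fmod α (x + a) = α⁻¹ + a⁻¹
  · rw [h₁, card_fiber_Fmod_inv_add_inv hcard hodd hα ha haα]
    simp [hb]
  by_cases h₂ : Fmod α x + Fmod α (x + a) = (a + α)⁻¹
  · rw [h₂, card_fiber_Fmod_inv_add hcard hodd hα ha haα]
    simp [hb.symm]
  have hfib : fiber (Fmod α) a (Fmod α x + Fmod α (x + a)) = {x, x + a} := by
    ext y
    simp [mem_fiber, Fmod_add_Fmod_add_eq_iff_of_ne ha haα h₁ h₂]
  simp [hfib, card_pair_add ha, h₁, h₂]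

end Fmod

end CharTwo

theorem stmt_7_general (n : ℕ) (hodd : Odd n)
    [CharP F 2] (hcard : Fintype.card F = 2 ^ n)
    (α : F) (hα : α ≠ 0) :
    (∀ a : F, a ≠ 0 → a ≠ α → ∀ x : F,
      (nabla (Fmod α) a x = 4 ↔
        ((Tr n (α / (a + α)) = 0 ∧ ∃ ρ : F, ρ ^ 2 + ρ = α / (a + α) ∧
            (x = 0 ∨ x = a ∨ x = a * ρ ∨ x = a * ρ + a)) ∨
         (Tr n (α / a) = 1 ∧ ∃ μ : F, μ ^ 2 + μ = (a + α) / a ∧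
            (x = α ∨ x = α + a ∨ x = a * μ ∨ x = a * μ + a)))) ∧
      (nabla (Fmod α) a x = 2 ∨ nabla (Fmod α) a x = 4)) ∧
    (∀ x : F, nabla (Fmod α) α x = 2) := by
  refine ⟨fun a ha haα x => ?_, nabla_Fmod_self hcard hodd hα⟩
  have hA := exists_sq_add_self_and_eq_iff ha (α / (a + α)) 0 x
  have hB := exists_sq_add_self_and_eq_iff ha ((a + α) / a) α x
  rw [zero_add, ← Fmod_add_Fmod_add_eq_inv_add_inv_iff hcard hodd hα ha haα] at hA
  rw [← Fmod_add_Fmod_add_eq_inv_add_iff hcard hodd hα ha haα] at hB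
  have hTrA : (∃ ρ : F, ρ ^ 2 + ρ = α / (a + α)) → Tr n (α / (a + α)) = 0 :=
    fun ⟨ρ, hρ⟩ => hρ ▸ Tr_sq_add_self hcard ρ
  have hTrB : (∃ μ : F, μ ^ 2 + μ = (a + α) / a) → Tr n (α / a) = 1 :=
    fun ⟨μ, hμ⟩ => Tr_eq_one_of_sq_add_self_eq hcard hodd (by rw [hμ, add_div, div_self ha])
  rw [hA, hB, nabla_Fmod hcard hodd hα ha haα]
  split_ifs <;> grind

/-- description of `∇_{F_{0,α}}(a,x)` for odd `n ≥ 3`. -/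
theorem stmt_7 (n : ℕ) (hn : 3 ≤ n) (hodd : Odd n)
    [CharP F 2] (hcard : Fintype.card F = 2 ^ n)
    (α : F) (hα : α ≠ 0) :
    (∀ a : F, a ≠ 0 → a ≠ α → ∀ x : F,
      (nabla (Fmod α) a x = 4 ↔
        ((Tr n (α / (a + α)) = 0 ∧ ∃ ρ : F, ρ ^ 2 + ρ = α / (a + α) ∧
            (x = 0 ∨ x = a ∨ x = a * ρ ∨ x = a * ρ + a)) ∨
         (Tr n (α / a) = 1 ∧ ∃ μ : F, μ ^ 2 + μ = (a + α) / a ∧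
            (x = α ∨ x = α + a ∨ x = a * μ ∨ x = a * μ + a)))) ∧
      (nabla (Fmod α) a x = 2 ∨ nabla (Fmod α) a x = 4)) ∧
    (∀ x : F, nabla (Fmod α) α x = 2) :=
  stmt_7_general n hodd hcard α hα

end APNPaper
end

section
/- Let n ≥ 4 be even, q = 2^n, α ∈ 𝔽_q^*, and let ω be a fixed element of 𝔽_4 \ 𝔽_2 regarded as an element of 𝔽_q. If n ≡ 2 (mod 4), then ∇_{F_{0,α}}(a,x) ≤ 4 for all a ∈ 𝔽_q^* and x ∈ 𝔽_q. If n ≡ 0 (mod 4), then ∇_{F_{0,α}}(a,x) = 6 holds if and only if a ∈ {αω, αω²} and x belongs to the set {0, α, αω, αω², aρ, aρ + a}, where ρ ∈ 𝔽_q satisfies ρ² + ρ = ω when a = αω, and ρ² + ρ = ω² when a = αω². -/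
namespace APNPaper

open Finset

variable {F : Type*} [Field F] [Fintype F] [DecidableEq F]

/-!
Away from the four points `0, a, α, α + a`, the equation `F_{0,α}(x) + F_{0,α}(x + a) = b` is
`x⁻¹ + (x + a)⁻¹ = b`, i.e. the quadratic `x² + a x + a/b = 0`, so it has at most two solutions
there. The four special points come in two pairs with values `α⁻¹ + a⁻¹` and `(α + a)⁻¹`, so
`δ(a, b) ≤ 4` unless these values coincide and the quadratic has roots. The values coincide
exactly when `a = α u` with `u² = u + 1` (so `u ∈ {ω, ω²}`), and then the roots are `a ρ` and
`a ρ + a` with `ρ² + ρ = u`. Such a `ρ` satisfies `ρ⁴ = ρ + 1`, so it lies in `𝔽₁₆ \ 𝔽₄`; this is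
impossible in `𝔽_{2^n}` for `n ≡ 2 (mod 4)` and possible for `n ≡ 0 (mod 4)`.
-/

theorem eq_or_eq_of_quadratic {R : Type*} [CommRing R] [IsDomain R] {p q x y z : R}
    (hx : x ^ 2 + p * x + q = 0) (hy : y ^ 2 + p * y + q = 0) (hz : z ^ 2 + p * z + q = 0)
    (hxy : x ≠ y) : z = x ∨ z = y := by
  have hsum : x + y + p = 0 := by
    have h : (x - y) * (x + y + p) = 0 := by linear_combination hx - hy
    exact (mul_eq_zero.1 h).resolve_left (sub_ne_zero.2 hxy)
  have h : (z - x) * (z - y) = 0 := by linear_combination hz - (z - x) * hsum - hx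
  exact (mul_eq_zero.1 h).imp sub_eq_zero.1 sub_eq_zero.1

theorem card_le_two_of_quadratic {R : Type*} [CommRing R] [IsDomain R] {p q : R}
    {s : Finset R} (h : ∀ x ∈ s, x ^ 2 + p * x + q = 0) : s.card ≤ 2 := by
  by_contra! hs
  obtain ⟨x, hx, y, hy, z, hz, hxy, hxz, hyz⟩ := two_lt_card.1 hs
  rcases eq_or_eq_of_quadratic (h x hx) (h y hy) (h z hz) hxy with rfl | rfl
  exacts [hxz rfl, hyz rfl]

section Field

variable {K : Type*} [Field K]

theorem sq_add_mul_add_sq_eq_zero_of_inv_add_inv {α a : K} (hα : α ≠ 0) (ha : a ≠ 0)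
    (hαa : α + a ≠ 0) (h : α⁻¹ + a⁻¹ = (α + a)⁻¹) : α ^ 2 + α * a + a ^ 2 = 0 := by
  field_simp at h
  linear_combination h

theorem ne_zero_ne_one_of_sq_eq_add_one {u : K} (hu : u ^ 2 = u + 1) : u ≠ 0 ∧ u ≠ 1 := by
  constructor <;>
  · rintro rfl
    exact one_ne_zero (by linear_combination -hu)

theorem ne_zero_ne_of_eq_mul {α a u : K} (hα : α ≠ 0)
    (hu : u ^ 2 = u + 1) (ha : a = α * u) : a ≠ 0 ∧ a ≠ α := by
  obtain ⟨hu0, hu1⟩ := ne_zero_ne_one_of_sq_eq_add_one hu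
  exact ⟨ha ▸ mul_ne_zero hα hu0, fun h => hu1 (mul_left_cancel₀ hα (by rw [← ha, h, mul_one]))⟩

theorem add_eq_mul_of_sq_eq_add_one {α a u : K} (hu : u ^ 2 = u + 1) (ha : a = α * u) :
    α + a = a * u := by
  rw [ha]
  linear_combination -α * hu

section Fmod

variable [DecidableEq K]

theorem Fmod_zero (α : K) : Fmod α 0 = α⁻¹ := if_pos rfl

theorem Fmod_self (α : K) : Fmod α α = 0 := by
  by_cases hα : α = 0 <;> simp [Fmod, hα]

theorem Fmod_of_ne {α x : K} (hx : x ≠ 0) (hxα : x ≠ α) : Fmod α x = x⁻¹ := by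
  simp [Fmod, hx, hxα]

theorem Fmod_derivative_zero {α a : K} (ha : a ≠ 0) (haα : a ≠ α) :
    Fmod α 0 + Fmod α (0 + a) = α⁻¹ + a⁻¹ := by
  rw [zero_add, Fmod_zero, Fmod_of_ne ha haα]

end Fmod

section CharTwo

variable [CharP K 2]

theorem eq_or_eq_sq_of_sq_eq_add_one {ω u : K} (hω : ω ^ 2 = ω + 1) (hu : u ^ 2 = u + 1) :
    u = ω ∨ u = ω ^ 2 := by
  have h : (u + ω) * (u + (ω + 1)) = 0 := by
    linear_combination hu + hω + (u + ω + 1 + u * ω) * CharTwo.two_eq_zero (R := K)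
  exact (mul_eq_zero.1 h).imp CharTwo.add_eq_zero.1 fun h => (CharTwo.add_eq_zero.1 h).trans hω.symm

theorem pow_four_eq_add_one {u ρ : K} (hu : u ^ 2 = u + 1) (hρ : ρ ^ 2 + ρ = u) :
    ρ ^ 4 = ρ + 1 := by
  linear_combination (ρ ^ 2 + ρ + u + 1) * hρ + hu +
    (u - ρ - ρ ^ 2 - ρ ^ 3) * CharTwo.two_eq_zero (R := K)

theorem ne_of_sq_add_self_eq {u σ : K} (hu : u ^ 2 = u + 1) (hσ : σ ^ 2 + σ = u) :
    σ ≠ 0 ∧ σ ≠ 1 ∧ σ ≠ u ∧ σ ≠ u ^ 2 := by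
  have hσ4 := pow_four_eq_add_one hu hσ
  have ne_of_pow_four {y : K} (hy : y ^ 4 = y) : σ ≠ y := by
    rintro rfl
    exact one_ne_zero (by linear_combination hy - hσ4)
  have hu4 : u ^ 4 = u := by
    linear_combination (u ^ 2 + u + 2) * hu + (u + 1) * CharTwo.two_eq_zero (R := K)
  refine ⟨ne_of_pow_four (by ring), ne_of_pow_four (by ring), ne_of_pow_four hu4,
    ne_of_pow_four ?_⟩
  rw [← pow_mul, mul_comm, pow_mul, hu4]

theorem sq_add_self_add_one (σ : K) : (σ + 1) ^ 2 + (σ + 1) = σ ^ 2 + σ := by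
  linear_combination (σ + 1) * CharTwo.two_eq_zero (R := K)

theorem eq_mul_sq_of_sq_eq_add_one {α a u : K} (hu : u ^ 2 = u + 1) (ha : a = α * u) :
    α = a * u ^ 2 := by
  rw [ha]
  linear_combination -α * (u + 1) * hu - α * u * CharTwo.two_eq_zero (R := K)

theorem mul_ne_of_sq_add_self_eq {α a u σ : K} (hα : α ≠ 0) (hu : u ^ 2 = u + 1)
    (ha : a = α * u) (hσ : σ ^ 2 + σ = u) :
    a * σ ≠ 0 ∧ a * σ ≠ α ∧ a * σ ≠ a ∧ a * σ ≠ α + a := by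
  obtain ⟨hσ0, hσ1, hσu, hσu2⟩ := ne_of_sq_add_self_eq hu hσ
  have ha0 := (ne_zero_ne_of_eq_mul hα hu ha).1
  have hα_eq := eq_mul_sq_of_sq_eq_add_one hu ha
  have hαa_eq := add_eq_mul_of_sq_eq_add_one hu ha
  refine ⟨mul_ne_zero ha0 hσ0, ?_, ?_, ?_⟩
  · rw [hα_eq]
    exact fun h => hσu2 (mul_left_cancel₀ ha0 h)
  · exact fun h => hσ1 (mul_left_cancel₀ ha0 (h.trans (mul_one a).symm))
  · rw [hαa_eq]
    exact fun h => hσu (mul_left_cancel₀ ha0 h)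

theorem inv_add_inv_add {a x : K} (hx : x ≠ 0) (hxa : x + a ≠ 0) :
    x⁻¹ + (x + a)⁻¹ = a / (x * (x + a)) := by
  field_simp
  linear_combination x * CharTwo.two_eq_zero (R := K)

theorem sq_add_mul_add_eq_zero_of_inv_add_inv_add {a b x : K} (ha : a ≠ 0) (hx : x ≠ 0)
    (hxa : x + a ≠ 0) (h : x⁻¹ + (x + a)⁻¹ = b) : x ^ 2 + a * x + a * b⁻¹ = 0 := by
  rw [← h, inv_add_inv_add hx hxa, inv_div, mul_div_cancel₀ _ ha]
  linear_combination (x ^ 2 + a * x) * CharTwo.two_eq_zero (R := K)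

theorem derivative_periodic (G : K → K) (a : K) : Function.Periodic (fun x => G x + G (x + a)) a :=
  fun x => by dsimp only; rw [add_assoc, CharTwo.add_self_eq_zero, add_zero, add_comm]

section Fmod

variable [DecidableEq K] {α a : K}

theorem Fmod_derivative_self (ha : a ≠ 0) (haα : a ≠ α) :
    Fmod α α + Fmod α (α + a) = (α + a)⁻¹ := by
  rw [Fmod_self, zero_add, Fmod_of_ne]
  · exact fun h => haα (CharTwo.add_eq_zero.1 h).symm
  · exact fun h => ha (by simpa using h)

theorem Fmod_derivative_zero_add (ha : a ≠ 0) (haα : a ≠ α) :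
    Fmod α a + Fmod α (a + a) = α⁻¹ + a⁻¹ := by
  have h := (derivative_periodic (Fmod α) a 0).trans (Fmod_derivative_zero ha haα)
  rwa [zero_add] at h

theorem Fmod_derivative_self_add (ha : a ≠ 0) (haα : a ≠ α) :
    Fmod α (α + a) + Fmod α (α + a + a) = (α + a)⁻¹ :=
  (derivative_periodic (Fmod α) a α).trans (Fmod_derivative_self ha haα)

theorem Fmod_derivative_of_ne {x : K} (hx0 : x ≠ 0) (hxα : x ≠ α) (hxa : x ≠ a)
    (hxαa : x ≠ α + a) : Fmod α x + Fmod α (x + a) = x⁻¹ + (x + a)⁻¹ := by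
  rw [Fmod_of_ne hx0 hxα, Fmod_of_ne]
  · exact fun h => hxa (CharTwo.add_eq_zero.1 h)
  · exact fun h => hxαa (CharTwo.add_eq_iff_eq_add.1 h)

end Fmod

end CharTwo

end Field

def derivFiber (G : F → F) (a b : F) : Finset F :=
  univ.filter fun x => G x + G (x + a) = b

theorem card_derivFiber (G : F → F) (a b : F) : (derivFiber G a b).card = delta G a b := rfl

@[simp]
theorem mem_derivFiber {G : F → F} {a b x : F} : x ∈ derivFiber G a b ↔ G x + G (x + a) = b := by
  simp [derivFiber]

section FmodFiber

variable [CharP F 2] {α a : F}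

theorem quadratic_of_mem_derivFiber_Fmod_sdiff (ha : a ≠ 0) {b x : F}
    (hx : x ∈ derivFiber (Fmod α) a b \ {0, α, a, α + a}) : x ^ 2 + a * x + a * b⁻¹ = 0 := by
  simp only [mem_sdiff, mem_derivFiber, mem_insert, mem_singleton, not_or] at hx
  obtain ⟨hxb, hx0, hxα, hxa, hxαa⟩ := hx
  rw [Fmod_derivative_of_ne hx0 hxα hxa hxαa] at hxb
  exact sq_add_mul_add_eq_zero_of_inv_add_inv_add ha hx0
    (fun h => hxa (CharTwo.add_eq_zero.1 h)) hxb

theorem ne_and_eq_of_two_lt_card_derivFiber_Fmod_inter (ha : a ≠ 0) {b : F}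
    (hcard : 2 < (derivFiber (Fmod α) a b ∩ {0, α, a, α + a}).card) :
    a ≠ α ∧ b = α⁻¹ + a⁻¹ ∧ b = (α + a)⁻¹ := by
  have not_subset_pair (y z : F) : ¬ derivFiber (Fmod α) a b ∩ {0, α, a, α + a} ⊆ {y, z} :=
    fun h => (card_le_card h).trans card_le_two |>.not_gt hcard
  have haα : a ≠ α := by
    rintro rfl
    refine not_subset_pair 0 a fun x hx => ?_
    simp only [mem_inter, mem_insert, mem_singleton, CharTwo.add_self_eq_zero] at hx ⊢
    tauto
  refine ⟨haα, by_contra fun hb => not_subset_pair α (α + a) fun x hx => ?_,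
    by_contra fun hb => not_subset_pair 0 a fun x hx => ?_⟩
  all_goals
    simp only [mem_inter, mem_derivFiber, mem_insert, mem_singleton] at hx ⊢
    obtain ⟨hxb, rfl | rfl | rfl | rfl⟩ := hx
  · exact (hb (hxb ▸ Fmod_derivative_zero ha haα)).elim
  · tauto
  · exact (hb (hxb ▸ Fmod_derivative_zero_add ha haα)).elim
  · tauto
  · tauto
  · exact (hb (hxb ▸ Fmod_derivative_self ha haα)).elim
  · tauto
  · exact (hb (hxb ▸ Fmod_derivative_self_add ha haα)).elim

theorem delta_Fmod_le_four_or (hα : α ≠ 0) (ha : a ≠ 0) (b : F) :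
    delta (Fmod α) a b ≤ 4 ∨
      ∃ u ρ : F, u ^ 2 = u + 1 ∧ a = α * u ∧ ρ ^ 2 + ρ = u ∧ b = (α + a)⁻¹ := by
  set S := derivFiber (Fmod α) a b
  set T : Finset F := {0, α, a, α + a}
  have hsplit : (S ∩ T).card + (S \ T).card = delta (Fmod α) a b :=
    card_inter_add_card_sdiff S T
  have hout : (S \ T).card ≤ 2 :=
    card_le_two_of_quadratic fun x hx => quadratic_of_mem_derivFiber_Fmod_sdiff ha hx
  by_cases hin : (S ∩ T).card ≤ 2
  · left
    omega
  obtain ⟨haα, hb₀, hbα⟩ := ne_and_eq_of_two_lt_card_derivFiber_Fmod_inter ha (not_le.1 hin)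
  obtain hempty | ⟨x, hx⟩ := (S \ T).eq_empty_or_nonempty
  · left
    have : (S ∩ T).card ≤ 4 := (card_le_card inter_subset_right).trans card_le_four
    rw [hempty, card_empty] at hsplit
    omega
  right
  have hαa : α + a ≠ 0 := fun h => haα (CharTwo.add_eq_zero.1 h).symm
  have hrel := sq_add_mul_add_sq_eq_zero_of_inv_add_inv hα ha hαa (hb₀.symm.trans hbα)
  have hquad := quadratic_of_mem_derivFiber_Fmod_sdiff ha hx
  rw [hbα, inv_inv] at hquad
  refine ⟨a / α, x / a, ?_, by field_simp, ?_, hbα⟩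
  · field_simp
    linear_combination hrel - (a * α + α ^ 2) * CharTwo.two_eq_zero (R := F)
  · field_simp
    linear_combination α * hquad - a * hrel

theorem derivFiber_Fmod_eq (hα : α ≠ 0) {u ρ : F} (hu : u ^ 2 = u + 1) (ha : a = α * u)
    (hρ : ρ ^ 2 + ρ = u) :
    derivFiber (Fmod α) a (α + a)⁻¹ = {0, α, a, α + a, a * ρ, a * ρ + a} := by
  have two : (2 : F) = 0 := CharTwo.two_eq_zero
  obtain ⟨ha0, haα⟩ := ne_zero_ne_of_eq_mul hα hu ha
  have hρ' := (sq_add_self_add_one ρ).trans hρ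
  have hαa_eq := add_eq_mul_of_sq_eq_add_one hu ha
  have hvalue : α⁻¹ + a⁻¹ = (α + a)⁻¹ := by
    have hu0 := (ne_zero_ne_one_of_sq_eq_add_one hu).1
    rw [hαa_eq, ha]
    field_simp
    linear_combination hu + u * two
  have hroot (σ : F) (hσ : σ ^ 2 + σ = u) :
      Fmod α (a * σ) + Fmod α (a * σ + a) = (α + a)⁻¹ := by
    obtain ⟨h0, hα', h1, hαa'⟩ := mul_ne_of_sq_add_self_eq hα hu ha hσ
    rw [Fmod_derivative_of_ne h0 hα' h1 hαa',
      inv_add_inv_add h0 fun h => h1 (CharTwo.add_eq_zero.1 h), hαa_eq,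
      show a * σ * (a * σ + a) = a * (a * u) by rw [← hσ]; ring, div_mul_cancel_left₀ ha0]
  have hquad (σ : F) (hσ : σ ^ 2 + σ = u) :
      (a * σ) ^ 2 + a * (a * σ) + a * (α + a)⁻¹⁻¹ = 0 := by
    rw [inv_inv, hαa_eq]
    linear_combination a ^ 2 * hσ + a ^ 2 * u * two
  ext x
  simp only [mem_derivFiber, mem_insert, mem_singleton]
  refine ⟨fun hx => ?_, ?_⟩
  · by_contra! hne
    obtain ⟨hx0, hxα, hxa, hxαa, hxρ, hxρa⟩ := hne
    have hxquad := quadratic_of_mem_derivFiber_Fmod_sdiff ha0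
      (mem_sdiff.2 ⟨mem_derivFiber.2 hx, by simp [hx0, hxα, hxa, hxαa]⟩)
    rcases eq_or_eq_of_quadratic (hquad ρ hρ) (by simpa [mul_add_one] using hquad (ρ + 1) hρ')
      hxquad (by simpa using ha0) with h | h
    exacts [hxρ h, hxρa h]
  · rintro (rfl | rfl | rfl | rfl | rfl | rfl)
    · exact (Fmod_derivative_zero ha0 haα).trans hvalue
    · exact Fmod_derivative_self ha0 haα
    · exact (Fmod_derivative_zero_add ha0 haα).trans hvalue
    · exact Fmod_derivative_self_add ha0 haα
    · exact hroot ρ hρ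
    · exact (derivative_periodic (Fmod α) a (a * ρ)).trans (hroot ρ hρ)

theorem delta_Fmod_eq_six (hα : α ≠ 0) {u ρ : F} (hu : u ^ 2 = u + 1) (ha : a = α * u)
    (hρ : ρ ^ 2 + ρ = u) : delta (Fmod α) a (α + a)⁻¹ = 6 := by
  obtain ⟨ha0, haα⟩ := ne_zero_ne_of_eq_mul hα hu ha
  obtain ⟨hρ0, hρα, hρa, hραa⟩ := mul_ne_of_sq_add_self_eq hα hu ha hρ
  obtain ⟨hρ0', hρα', hρa', hραa'⟩ :=
    mul_ne_of_sq_add_self_eq hα hu ha ((sq_add_self_add_one ρ).trans hρ)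
  rw [mul_add_one] at hρ0' hρα' hρa' hραa'
  rw [← card_derivFiber, derivFiber_Fmod_eq hα hu ha hρ]
  have hαa0 : α + a ≠ 0 := fun h => haα (CharTwo.add_eq_zero.1 h).symm
  have hαaα : α + a ≠ α := fun h => ha0 (by simpa using h)
  have hαaa : α + a ≠ a := fun h => hα (by simpa using h)
  have hρρa : a * ρ ≠ a * ρ + a := fun h => ha0 (by simpa using h)
  rw [card_insert_of_notMem, card_insert_of_notMem, card_insert_of_notMem,
    card_insert_of_notMem, card_pair hρρa]
  all_goals simp only [mem_insert, mem_singleton, not_or]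
  exacts [⟨hραa.symm, hραa'.symm⟩, ⟨hαaa.symm, hρa.symm, hρa'.symm⟩,
    ⟨haα.symm, hαaα.symm, hρα.symm, hρα'.symm⟩, ⟨hα.symm, ha0.symm, hαa0.symm, hρ0.symm, hρ0'.symm⟩]

theorem nabla_Fmod_eq_six_iff (hα : α ≠ 0) (ha : a ≠ 0) (x : F) :
    nabla (Fmod α) a x = 6 ↔ ∃ u ρ : F, u ^ 2 = u + 1 ∧ a = α * u ∧ ρ ^ 2 + ρ = u ∧
      x ∈ ({0, α, a, α + a, a * ρ, a * ρ + a} : Finset F) := by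
  constructor
  · intro h6
    obtain h | ⟨u, ρ, hu, hau, hρ, hb⟩ := delta_Fmod_le_four_or hα ha (Fmod α x + Fmod α (x + a))
    · rw [nabla] at h6
      omega
    · refine ⟨u, ρ, hu, hau, hρ, ?_⟩
      rw [← derivFiber_Fmod_eq hα hu hau hρ, ← hb, mem_derivFiber]
  · rintro ⟨u, ρ, hu, hau, hρ, hx⟩
    rw [← derivFiber_Fmod_eq hα hu hau hρ, mem_derivFiber] at hx
    rw [nabla, hx, delta_Fmod_eq_six hα hu hau hρ]

end FmodFiber

theorem pow_pow_eq_self {M : Type*} [Monoid M] {x : M} {k : ℕ} (h : x ^ k = x) (m : ℕ) :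
    x ^ k ^ m = x := by
  induction m with
  | zero => simp
  | succ m ih => rw [pow_succ, pow_mul, ih, h]

theorem sq_add_self_ne_of_mod_four_eq_two {K : Type*} [Field K] [Fintype K] [CharP K 2] {n : ℕ}
    (hcard : Fintype.card K = 2 ^ n) (hn : n % 4 = 2) {u : K} (hu : u ^ 2 = u + 1) (ρ : K) :
    ρ ^ 2 + ρ ≠ u := by
  intro hρ
  have hρ4 := pow_four_eq_add_one hu hρ
  have hρ16 : ρ ^ 2 ^ 4 = ρ := by
    rw [show 2 ^ 4 = 4 * 4 by rfl, pow_mul, hρ4]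
    linear_combination hρ4 + (2 * ρ ^ 3 + 3 * ρ ^ 2 + 2 * ρ + 1) * CharTwo.two_eq_zero (R := K)
  obtain ⟨m, rfl⟩ : ∃ m, n = 4 * m + 2 := ⟨n / 4, by omega⟩
  -- the Frobenius `ρ ↦ ρ ^ q` fixes `ρ`, but `ρ ^ (2 ^ (4 m + 2)) = (ρ ^ (16 ^ m)) ^ 4 = ρ + 1`
  have hfrob := FiniteField.pow_card ρ
  rw [hcard, pow_add, pow_mul, pow_mul, pow_pow_eq_self hρ16, show 2 ^ 2 = 4 by rfl, hρ4] at hfrob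
  exact one_ne_zero (by linear_combination hfrob)

theorem stmt_10_general (n : ℕ)
    [CharP F 2] (hcard : Fintype.card F = 2 ^ n)
    (α : F) (hα : α ≠ 0) (ω : F) (hω : ω ^ 2 = ω + 1) :
    (n % 4 = 2 → ∀ a : F, a ≠ 0 → ∀ x : F, nabla (Fmod α) a x ≤ 4) ∧
    (n % 4 = 0 → ∀ a : F, a ≠ 0 → ∀ x : F,
      (nabla (Fmod α) a x = 6 ↔
        ((a = α * ω ∧ ∃ ρ : F, ρ ^ 2 + ρ = ω ∧
            (x = 0 ∨ x = α ∨ x = α * ω ∨ x = α * ω ^ 2 ∨ x = a * ρ ∨ x = a * ρ + a)) ∨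
         (a = α * ω ^ 2 ∧ ∃ ρ : F, ρ ^ 2 + ρ = ω ^ 2 ∧
            (x = 0 ∨ x = α ∨ x = α * ω ∨ x = α * ω ^ 2 ∨ x = a * ρ ∨ x = a * ρ + a))))) := by
  have two : (2 : F) = 0 := CharTwo.two_eq_zero
  have hω' : (ω ^ 2) ^ 2 = ω ^ 2 + 1 := by linear_combination (ω ^ 2 + ω + 1) * hω + ω * two
  have hαω : α + α * ω = α * ω ^ 2 := by linear_combination -α * hω
  have hαω' : α + α * ω ^ 2 = α * ω := by linear_combination α * hω + α * two
  refine ⟨fun hn a ha x => ?_, fun _ a ha x => ?_⟩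
  · obtain h | ⟨u, ρ, hu, -, hρ, -⟩ := delta_Fmod_le_four_or hα ha (Fmod α x + Fmod α (x + a))
    · exact h
    · exact absurd hρ (sq_add_self_ne_of_mod_four_eq_two hcard hn hu ρ)
  rw [nabla_Fmod_eq_six_iff hα ha]
  simp only [mem_insert, mem_singleton]
  constructor
  · rintro ⟨u, ρ, hu, rfl, hρ, hx⟩
    obtain rfl | rfl := eq_or_eq_sq_of_sq_eq_add_one hω hu
    · exact Or.inl ⟨rfl, ρ, hρ, by rwa [hαω] at hx⟩
    · rw [hαω'] at hx
      exact Or.inr ⟨rfl, ρ, hρ, by tauto⟩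
  · rintro (⟨rfl, ρ, hρ, hx⟩ | ⟨rfl, ρ, hρ, hx⟩)
    · exact ⟨ω, ρ, hω, rfl, hρ, by rwa [hαω]⟩
    · exact ⟨ω ^ 2, ρ, hω', rfl, hρ, by rw [hαω']; tauto⟩

/-- for even `n ≥ 4`, occurrence of `∇_{F_{0,α}}(a,x) = 6`. -/
theorem stmt_10 (n : ℕ) (hn : 4 ≤ n) (heven : Even n)
    [CharP F 2] (hcard : Fintype.card F = 2 ^ n)
    (α : F) (hα : α ≠ 0) (ω : F) (hω : ω ^ 2 = ω + 1) :
    (n % 4 = 2 → ∀ a : F, a ≠ 0 → ∀ x : F, nabla (Fmod α) a x ≤ 4) ∧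
    (n % 4 = 0 → ∀ a : F, a ≠ 0 → ∀ x : F,
      (nabla (Fmod α) a x = 6 ↔
        ((a = α * ω ∧ ∃ ρ : F, ρ ^ 2 + ρ = ω ∧
            (x = 0 ∨ x = α ∨ x = α * ω ∨ x = α * ω ^ 2 ∨ x = a * ρ ∨ x = a * ρ + a)) ∨
         (a = α * ω ^ 2 ∧ ∃ ρ : F, ρ ^ 2 + ρ = ω ^ 2 ∧
            (x = 0 ∨ x = α ∨ x = α * ω ∨ x = α * ω ^ 2 ∨ x = a * ρ ∨ x = a * ρ + a))))) :=
  stmt_10_general n hcard α hα ω hω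

end APNPaper
end
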